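/- Let C be a category with covers and let f : X → Y be a covering Kan fibration in sC. Then for all n > 0 the map fₙ : Xₙ → Yₙ is a cover in C (and f₀ : X₀ → Y₀ is a cover by definition). -/

import Mathlib

open CategoryTheory CategoryTheory.Limits Opposite

universe v u

/-- A *category with covers*: a (locally small) category `C` together with a distinguished
subcategory of morphisms, called *covers*, satisfying the axioms of the paper:
(i) there is a terminal object and every map to it is a cover;
(ii) pullbacks of covers along arbitrary morphisms exist and are covers;
(iii) if `f` and `f ≫ g` are covers then so is `g`;
(iv) every cover is an effective epimorphism, i.e. `X ×_Y X ⇉ X → Y` is a coequalizer. -/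
structure CoversOn (C : Type u) [Category.{v} C] where
  /-- the distinguished class of covers -/
  isCover : ∀ ⦃X Y : C⦄, (X ⟶ Y) → Prop
  /-- identities are covers (covers form a subcategory) -/
  isCover_id : ∀ X : C, isCover (𝟙 X)
  /-- covers are closed under composition (covers form a subcategory) -/
  isCover_comp : ∀ {X Y Z : C} {f : X ⟶ Y} {g : Y ⟶ Z}, isCover f → isCover g → isCover (f ≫ g)
  /-- axiom (i): `C` has a terminal object -/
  hasTerminal : HasTerminal C
  /-- axiom (i): every morphism to a terminal object is a cover -/
  isCover_toTerminal : ∀ {T : C} (hT : IsTerminal T) (X : C), isCover (hT.from X)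
  /-- axiom (ii): pullbacks of covers along arbitrary morphisms exist -/
  hasPullback_of_isCover : ∀ {X Y Z : C} (f : X ⟶ Z) {g : Y ⟶ Z}, isCover g → HasPullback f g
  /-- axiom (ii): pullbacks of covers are covers -/
  isCover_of_isPullback : ∀ {P X Y Z : C} {fst : P ⟶ X} {snd : P ⟶ Y} {f : X ⟶ Z} {g : Y ⟶ Z},
    IsPullback fst snd f g → isCover g → isCover fst
  /-- axiom (iii): right cancellation -/
  isCover_of_comp : ∀ {X Y Z : C} {f : X ⟶ Y} {g : Y ⟶ Z}, isCover f → isCover (f ≫ g) → isCover g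
  /-- axiom (iv): covers are effective epimorphisms: for any kernel pair `p₁, p₂ : X ×_Y X ⇉ X`
  of a cover `f : X ⟶ Y`, the fork `X ×_Y X ⇉ X → Y` is a coequalizer -/
  isCoequalizer_of_isCover : ∀ {X Y : C} {f : X ⟶ Y}, isCover f →
    ∀ {P : C} {p₁ p₂ : P ⟶ X} (h : IsPullback p₁ p₂ f f),
      Nonempty (IsColimit (Cofork.ofπ f h.w))

open Simplicial

namespace CatCov

variable {C : Type u} [Category.{v} C]

/-- The concrete pullback presheaf `F ×_H G` of two presheaf morphisms `α : F ⟶ H`, `β : G ⟶ H`. -/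
@[simps]
def cpb {F G H : Cᵒᵖ ⥤ Type v} (α : F ⟶ H) (β : G ⟶ H) : Cᵒᵖ ⥤ Type v where
  obj U := { p : F.obj U × G.obj U // α.app U p.1 = β.app U p.2 }
  map {U V} u := TypeCat.ofHom fun p => ⟨(F.map u p.1.1, G.map u p.1.2), by
    dsimp
    rw [FunctorToTypes.naturality, FunctorToTypes.naturality]
    exact congrArg (H.map u) p.2⟩
  map_id U := by
    ext p <;> simp
  map_comp {U V W} u v := by
    ext p <;> simp

/-- First projection of the concrete pullback presheaf. -/
@[simps]
def cpbFst {F G H : Cᵒᵖ ⥤ Type v} (α : F ⟶ H) (β : G ⟶ H) : cpb α β ⟶ F where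
  app U := TypeCat.ofHom fun p => p.1.1

/-- Second projection of the concrete pullback presheaf. -/
@[simps]
def cpbSnd {F G H : Cᵒᵖ ⥤ Type v} (α : F ⟶ H) (β : G ⟶ H) : cpb α β ⟶ G where
  app U := TypeCat.ofHom fun p => p.1.2

/-- The universal map into the concrete pullback presheaf. -/
@[simps]
def cpbLift {E F G H : Cᵒᵖ ⥤ Type v} {α : F ⟶ H} {β : G ⟶ H}
    (p : E ⟶ F) (q : E ⟶ G) (w : p ≫ α = q ≫ β) : E ⟶ cpb α β where
  app U := TypeCat.ofHom fun x => ⟨(p.app U x, q.app U x), ConcreteCategory.congr_hom (NatTrans.congr_app w U) x⟩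
  naturality {U V} u := by
    ext x
    apply Subtype.ext
    apply Prod.ext
    · show p.app V (E.map u x) = F.map u (p.app U x)
      exact NatTrans.naturality_apply p u x
    · show q.app V (E.map u x) = G.map u (q.app U x)
      exact NatTrans.naturality_apply q u x

/-- Functoriality of the concrete pullback presheaf in the defining cospan. -/
@[simps]
def cpbMap {F G H F' G' H' : Cᵒᵖ ⥤ Type v} {α : F ⟶ H} {β : G ⟶ H}
    {α' : F' ⟶ H'} {β' : G' ⟶ H'} (tF : F ⟶ F') (tG : G ⟶ G') (tH : H ⟶ H')
    (hα : α ≫ tH = tF ≫ α') (hβ : β ≫ tH = tG ≫ β') : cpb α β ⟶ cpb α' β' where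
  app U := TypeCat.ofHom fun p => ⟨(tF.app U p.1.1, tG.app U p.1.2), by
    have h1 := ConcreteCategory.congr_hom (NatTrans.congr_app hα U) p.1.1
    have h2 := ConcreteCategory.congr_hom (NatTrans.congr_app hβ U) p.1.2
    dsimp at h1 h2 ⊢
    rw [← h1, ← h2]
    exact congrArg (tH.app U) p.2⟩
  naturality {U V} u := by
    ext p
    apply Subtype.ext
    apply Prod.ext
    · show tF.app V (F.map u p.1.1) = F'.map u (tF.app U p.1.1)
      exact NatTrans.naturality_apply tF u p.1.1
    · show tG.app V (G.map u p.1.2) = G'.map u (tG.app U p.1.2)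
      exact NatTrans.naturality_apply tG u p.1.2

/-- For a simplicial presheaf `F` and a simplicial set `K`, the presheaf `hom(K, F)` of simplicial
maps from `K` into (the `U`-points of) `F`; concretely, a `U`-point is a compatible family
assigning to each simplex of `K` a `U`-point of the corresponding level of `F`. -/
@[simps]
def sHom (K : SSet.{v}) (F : SimplicialObject (Cᵒᵖ ⥤ Type v)) : Cᵒᵖ ⥤ Type v where
  obj U := { ξ : ∀ (j : SimplexCategoryᵒᵖ), K.obj j → (F.obj j).obj U //
      ∀ (j j' : SimplexCategoryᵒᵖ) (β : j ⟶ j') (a : K.obj j),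
        ξ j' (K.map β a) = (F.map β).app U (ξ j a) }
  map {U V} u := TypeCat.ofHom fun ξ => ⟨fun j a => (F.obj j).map u (ξ.1 j a), by
    intro j j' β a
    dsimp only
    rw [ξ.2 j j' β a]
    exact (NatTrans.naturality_apply (F.map β) u (ξ.1 j a)).symm⟩
  map_id U := by
    ext ξ
    simp
  map_comp {U V W} u v := by
    ext ξ
    simp

/-- `hom(K, -)` is covariantly functorial in the simplicial presheaf. -/
@[simps]
def sHomMap (K : SSet.{v}) {F G : SimplicialObject (Cᵒᵖ ⥤ Type v)} (φ : F ⟶ G) :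
    sHom K F ⟶ sHom K G where
  app U := TypeCat.ofHom fun ξ => ⟨fun j a => (φ.app j).app U (ξ.1 j a), by
    intro j j' β a
    dsimp only
    rw [ξ.2 j j' β a]
    exact ConcreteCategory.congr_hom (congrArg (fun (t : F.obj j ⟶ G.obj j') => t.app U) (φ.naturality β)) (ξ.1 j a)⟩
  naturality {U V} u := by
    ext ξ
    apply Subtype.ext
    funext j a
    dsimp
    exact NatTrans.naturality_apply (φ.app j) u (ξ.1 j a)

/-- `hom(-, F)` is contravariantly functorial in the simplicial set. -/
@[simps]
def sHomRes {K L : SSet.{v}} (i : K ⟶ L) (F : SimplicialObject (Cᵒᵖ ⥤ Type v)) :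
    sHom L F ⟶ sHom K F where
  app U := TypeCat.ofHom fun ξ => ⟨fun j a => ξ.1 j (i.app j a), by
    intro j j' β a
    rw [← ξ.2 j j' β (i.app j a)]
    exact congrArg (ξ.1 j') (ConcreteCategory.congr_hom (i.naturality β) a)⟩
  naturality {U V} u := by
    ext ξ
    rfl

/-- The canonical "Yoneda" map sending an `n`-simplex of a simplicial presheaf `F` to the
corresponding simplicial map `Δ[n] ⟶ F`. -/
@[simps]
def fromSimplex (F : SimplicialObject (Cᵒᵖ ⥤ Type v)) (n : SimplexCategory) :
    F.obj (op n) ⟶ sHom (SSet.stdSimplex.obj n) F where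
  app U := TypeCat.ofHom fun x => ⟨fun j α => (F.map α.down.op).app U x, by
    intro j j' β α
    show (F.map ((β.unop ≫ α.down)).op).app U x = _
    rw [op_comp, Quiver.Hom.op_unop, F.map_comp]
    rfl⟩
  naturality {U V} u := by
    ext x
    apply Subtype.ext
    funext j α
    dsimp
    exact NatTrans.naturality_apply (F.map α.down.op) u x

/-- Restriction of an `n`-simplex of `F` along a map of simplicial sets `ι : K ⟶ Δ[n]`. -/
def restrictAlong {K : SSet.{v}} {n : SimplexCategory} (ι : K ⟶ SSet.stdSimplex.obj n)
    (F : SimplicialObject (Cᵒᵖ ⥤ Type v)) : F.obj (op n) ⟶ sHom K F :=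
  fromSimplex F n ≫ sHomRes ι F

lemma restrictAlong_natural {K : SSet.{v}} {n : SimplexCategory}
    (ι : K ⟶ SSet.stdSimplex.obj n) {F G : SimplicialObject (Cᵒᵖ ⥤ Type v)} (φ : F ⟶ G) :
    restrictAlong ι F ≫ sHomMap K φ = φ.app (op n) ≫ restrictAlong ι G := by
  apply NatTrans.ext
  funext U
  ext x
  apply Subtype.ext
  funext j a
  dsimp [restrictAlong]
  exact ConcreteCategory.congr_hom (congrArg (fun (t : F.obj (op n) ⟶ G.obj j) => t.app U)
    (φ.naturality (ι.app j a).down.op)) x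

/-- For `ι : K ⟶ Δ[n]` and `φ : F ⟶ G`, the relative object
`(K ↪ Δ[n])(φ) := hom(K, F) ×_{hom(K, G)} G_n`. -/
def relObj {K : SSet.{v}} {n : SimplexCategory} (ι : K ⟶ SSet.stdSimplex.obj n)
    {F G : SimplicialObject (Cᵒᵖ ⥤ Type v)} (φ : F ⟶ G) : Cᵒᵖ ⥤ Type v :=
  cpb (sHomMap K φ) (restrictAlong ι G)

/-- The canonical comparison map `F_n ⟶ hom(K, F) ×_{hom(K, G)} G_n`. -/
def relMap {K : SSet.{v}} {n : SimplexCategory} (ι : K ⟶ SSet.stdSimplex.obj n)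
    {F G : SimplicialObject (Cᵒᵖ ⥤ Type v)} (φ : F ⟶ G) : F.obj (op n) ⟶ relObj ι φ :=
  cpbLift (restrictAlong ι F) (φ.app (op n)) (restrictAlong_natural ι φ)

/-- `RepCover cov w` says: the presheaves `F` and `G` are representable, and, under (a choice of)
representing isomorphisms, the map of presheaves `w : F ⟶ G` corresponds to a cover in `C`.
(Covers are stable under pre- and post-composition with isomorphisms, so this does not depend on the
choice of representation.) -/
def RepCover (cov : CoversOn C) {F G : Cᵒᵖ ⥤ Type v} (w : F ⟶ G) : Prop :=
  ∃ (A B : C) (g : A ⟶ B) (eA : yoneda.obj A ≅ F) (eB : yoneda.obj B ≅ G),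
    cov.isCover g ∧ eA.hom ≫ w = yoneda.map g ≫ eB.hom

/-- A simplicial object of `C`, regarded as a simplicial presheaf via the Yoneda embedding. -/
abbrev ev (X : SimplicialObject C) : SimplicialObject (Cᵒᵖ ⥤ Type v) :=
  X ⋙ yoneda

/-- A morphism of simplicial objects of `C`, regarded as a morphism of simplicial presheaves. -/
abbrev evMap {X Y : SimplicialObject C} (f : X ⟶ Y) : ev X ⟶ ev Y :=
  Functor.whiskerRight f yoneda

/-- The relative horn object `Λⁿ_i(φ) := Λⁿ_i F ×_{Λⁿ_i G} G_n`. -/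
abbrev hornObj (n : ℕ) (i : Fin (n + 1)) {F G : SimplicialObject (Cᵒᵖ ⥤ Type v)} (φ : F ⟶ G) :
    Cᵒᵖ ⥤ Type v :=
  relObj (SSet.horn n i).ι φ

/-- The relative horn-filling map `λⁿ_i(φ) : F_n ⟶ Λⁿ_i(φ)`. -/
abbrev hornMap (n : ℕ) (i : Fin (n + 1)) {F G : SimplicialObject (Cᵒᵖ ⥤ Type v)} (φ : F ⟶ G) :
    F.obj (op (SimplexCategory.mk n)) ⟶ hornObj n i φ :=
  relMap (SSet.horn n i).ι φ

/-- The relative matching object `Mₙ(φ) := Mₙ F ×_{Mₙ G} G_n`. -/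
abbrev matchObj (n : ℕ) {F G : SimplicialObject (Cᵒᵖ ⥤ Type v)} (φ : F ⟶ G) :
    Cᵒᵖ ⥤ Type v :=
  relObj (SSet.boundary n).ι φ

/-- The relative boundary-filling map `μₙ(φ) : F_n ⟶ Mₙ(φ)`. -/
abbrev matchMap (n : ℕ) {F G : SimplicialObject (Cᵒᵖ ⥤ Type v)} (φ : F ⟶ G) :
    F.obj (op (SimplexCategory.mk n)) ⟶ matchObj n φ :=
  relMap (SSet.boundary n).ι φ

/-- A morphism of simplicial presheaves is a *Kan fibration* (relative to the covers on `C`) if,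
for all `n ≥ 1` and all `0 ≤ i ≤ n`, the relative horn object `Λⁿ_i(φ)` is representable and the
horn-filling map `λⁿ_i(φ)` is (represented by) a cover. -/
def IsKanFibration (cov : CoversOn C) {F G : SimplicialObject (Cᵒᵖ ⥤ Type v)} (φ : F ⟶ G) :
    Prop :=
  ∀ (n : ℕ) (i : Fin (n + 2)), RepCover cov (hornMap (n + 1) i φ)

/-- A morphism of simplicial presheaves is an *`N`-stack* if it is a Kan fibration and the
horn-filling maps `λᵏ_i(φ)` are isomorphisms for all `k > N`. -/
def IsStack (cov : CoversOn C) (N : ℕ) {F G : SimplicialObject (Cᵒᵖ ⥤ Type v)} (φ : F ⟶ G) :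
    Prop :=
  IsKanFibration cov φ ∧
    ∀ (k : ℕ) (i : Fin (k + 2)), N < k + 1 → IsIso (hornMap (k + 1) i φ)

end CatCov

namespace CatCov

variable {C : Type u} [Category.{v} C]

variable (cov : CoversOn C)

lemma isCover_of_isIso {A B : C} (e : A ⟶ B) [IsIso e] : cov.isCover e := by
  have sq : IsPullback e (𝟙 A) (inv e) (𝟙 A) :=
    IsPullback.of_horiz_isIso ⟨by simp⟩
  exact cov.isCover_of_isPullback sq (cov.isCover_id A)

variable {cov}

lemma repCover_comp {F G H : Cᵒᵖ ⥤ Type v} {w₁ : F ⟶ G} {w₂ : G ⟶ H}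
    (h₁ : RepCover cov w₁) (h₂ : RepCover cov w₂) : RepCover cov (w₁ ≫ w₂) := by
  obtain ⟨A, B, g, eA, eB, hg, hw⟩ := h₁
  obtain ⟨A', B', g', eA', eB', hg', hw'⟩ := h₂
  let u : B ⟶ A' := yoneda.preimage (eB.hom ≫ eA'.inv)
  have hu : yoneda.map u = eB.hom ≫ eA'.inv := yoneda.map_preimage _
  have : IsIso (yoneda.map u) := by rw [hu]; infer_instance
  have : IsIso u := isIso_of_reflects_iso u yoneda
  refine ⟨A, B', g ≫ u ≫ g', eA, eB', cov.isCover_comp hg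
    (cov.isCover_comp (isCover_of_isIso cov u) hg'), ?_⟩
  rw [← Category.assoc, hw]
  have heB : eB.hom = yoneda.map u ≫ eA'.hom := by rw [hu]; simp
  rw [Category.assoc, heB, Category.assoc, hw']
  simp only [Functor.map_comp, Category.assoc]

lemma repCover_of_isIso {F G : Cᵒᵖ ⥤ Type v} (w : F ⟶ G) [IsIso w] {B : C}
    (eB : yoneda.obj B ≅ G) : RepCover cov w :=
  ⟨B, B, 𝟙 B, eB ≪≫ (asIso w).symm, eB, cov.isCover_id B, by simp⟩

lemma repCover_congr {F G : Cᵒᵖ ⥤ Type v} {w w' : F ⟶ G} (h : RepCover cov w) (e : w = w') :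
    RepCover cov w' := e ▸ h

/-- The concrete pullback square is a pullback square of presheaves. -/
lemma cpb_isPullback {F G H : Cᵒᵖ ⥤ Type v} (α : F ⟶ H) (β : G ⟶ H) :
    IsPullback (cpbFst α β) (cpbSnd α β) α β := by
  refine IsPullback.of_isLimit' ⟨?_⟩ ?_
  · apply NatTrans.ext; funext U; refine ConcreteCategory.hom_ext _ _ fun p => ?_; exact p.2
  · refine PullbackCone.IsLimit.mk _ (fun s => cpbLift s.fst s.snd s.condition)
      (fun s => rfl) (fun s => rfl) ?_
    intro s m hm₁ hm₂
    apply NatTrans.ext; funext U; refine ConcreteCategory.hom_ext _ _ fun x => ?_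
    apply Subtype.ext
    have e₁ := ConcreteCategory.congr_hom (NatTrans.congr_app hm₁ U) x
    have e₂ := ConcreteCategory.congr_hom (NatTrans.congr_app hm₂ U) x
    exact Prod.ext e₁ e₂

lemma isPullback_of_cpbLift_isIso {E F G H : Cᵒᵖ ⥤ Type v} {α : F ⟶ H} {β : G ⟶ H}
    (p : E ⟶ F) (q : E ⟶ G) (w : p ≫ α = q ≫ β) (h : IsIso (cpbLift p q w)) :
    IsPullback p q α β := by
  refine (cpb_isPullback α β).of_iso ((asIso (cpbLift p q w)).symm)
    (Iso.refl F) (Iso.refl G) (Iso.refl H) ?_ ?_ (by simp) (by simp)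
  · simp only [Iso.symm_hom, asIso_inv, Category.comp_id]
    rw [IsIso.eq_inv_comp]; rfl
  · simp only [Iso.symm_hom, asIso_inv, Category.comp_id]
    rw [IsIso.eq_inv_comp]; rfl

lemma isPullback_of_bijective {E F G H : Cᵒᵖ ⥤ Type v} {α : F ⟶ H} {β : G ⟶ H}
    (p : E ⟶ F) (q : E ⟶ G) (w : p ≫ α = q ≫ β)
    (h : ∀ U, Function.Bijective ((cpbLift p q w).app U)) :
    IsPullback p q α β := by
  refine isPullback_of_cpbLift_isIso p q w ?_
  have : ∀ U, IsIso ((cpbLift p q w).app U) := fun U => (isIso_iff_bijective _).mpr (h U)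
  exact NatIso.isIso_of_isIso_app _

/-- If a presheaf map `fst` sits in a pullback square over a representable cover `w`,
with representable bottom-left corner, then `fst` is a representable cover. -/
lemma repCover_of_isPullback {P' F G H : Cᵒᵖ ⥤ Type v} {fst : P' ⟶ F} {snd : P' ⟶ G}
    {t : F ⟶ H} {w : G ⟶ H} (sq : IsPullback fst snd t w) (hw : RepCover cov w)
    {B' : C} (eF : yoneda.obj B' ≅ F) : RepCover cov fst := by
  obtain ⟨A, B, g, eA, eB, hg, hw'⟩ := hw
  let p : B' ⟶ B := yoneda.preimage (eF.hom ≫ t ≫ eB.inv)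
  have hp : yoneda.map p = eF.hom ≫ t ≫ eB.inv := yoneda.map_preimage _
  have hp' : yoneda.map p ≫ eB.hom = eF.hom ≫ t := by rw [hp]; simp
  haveI : HasPullback p g := cov.hasPullback_of_isCover p hg
  have sqC : IsPullback (pullback.fst p g) (pullback.snd p g) p g := IsPullback.of_hasPullback p g
  have ysq := sqC.map yoneda
  have transported : IsPullback (yoneda.map (pullback.fst p g) ≫ eF.hom)
      (yoneda.map (pullback.snd p g) ≫ eA.hom) t w := by
    refine ysq.of_iso (Iso.refl _) eF eA eB ?_ ?_ hp' hw'.symm <;> simp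
  let iso : yoneda.obj (pullback p g) ≅ P' := transported.isoIsPullback _ _ sq
  have hiso : iso.hom ≫ fst = yoneda.map (pullback.fst p g) ≫ eF.hom :=
    IsPullback.isoIsPullback_hom_fst _ _ _ _
  exact ⟨pullback p g, B', pullback.fst p g, iso, eF,
    cov.isCover_of_isPullback sqC hg, hiso⟩

/-- `yoneda.map` of a cover is a representable cover. -/
lemma repCover_yoneda_map {A B : C} {g : A ⟶ B} (hg : cov.isCover g) :
    RepCover cov (yoneda.map g) :=
  ⟨A, B, g, Iso.refl _, Iso.refl _, hg, by simp⟩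

lemma isCover_of_repCover_yoneda_map {A B : C} {g : A ⟶ B}
    (h : RepCover cov (yoneda.map g)) : cov.isCover g := by
  obtain ⟨A', B', g', eA, eB, hg', hw⟩ := h
  let u : A' ⟶ A := yoneda.preimage eA.hom
  let v : B' ⟶ B := yoneda.preimage eB.hom
  have hu : yoneda.map u = eA.hom := yoneda.map_preimage _
  have hv : yoneda.map v = eB.hom := yoneda.map_preimage _
  have : IsIso (yoneda.map u) := by rw [hu]; infer_instance
  have : IsIso u := isIso_of_reflects_iso u yoneda
  have : IsIso (yoneda.map v) := by rw [hv]; infer_instance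
  have : IsIso v := isIso_of_reflects_iso v yoneda
  have key : u ≫ g = g' ≫ v := by
    apply yoneda.map_injective
    simp only [Functor.map_comp, hu, hv]
    exact hw
  have : g = inv u ≫ g' ≫ v := by rw [← key]; simp
  rw [this]
  exact cov.isCover_comp (isCover_of_isIso cov _)
    (cov.isCover_comp hg' (isCover_of_isIso cov _))

end CatCov

namespace CatCov

open SSet Simplicial SimplexCategory

lemma union_singleton_ne_univ_iff {α : Type*} (r : Set α) (j : α) :
    r ∪ {j} ≠ Set.univ ↔ (r ≠ Set.univ ∧ r ≠ Set.univ \ {j}) := by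
  constructor
  · intro h
    refine ⟨?_, ?_⟩
    · rintro rfl; apply h; simp
    · rintro rfl; apply h; ext t; by_cases ht : t = j <;> simp [ht]
  · rintro ⟨h1, h2⟩ h
    by_cases hj : j ∈ r
    · apply h1; ext t; simp only [Set.mem_univ, iff_true]
      rcases (Set.ext_iff.1 h t).2 trivial with h' | h'
      · exact h'
      · simp only [Set.mem_singleton_iff] at h'; rw [h']; exact hj
    · apply h2; ext t
      constructor
      · intro ht
        exact ⟨trivial, fun he => hj (by simpa [Set.mem_singleton_iff.1 he] using ht)⟩
      · rintro ⟨-, ht⟩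
        rcases (Set.ext_iff.1 h t).2 trivial with h' | h'
        · exact h'
        · exact absurd (Set.mem_singleton_iff.1 h') ht

section Combinatorics

variable {N q : ℕ} {A : Set (Fin (N + 1))} (e : Fin (q + 1) ≃o A)

/-- The monotone injection `Fin (q+1) → Fin (N+1)` underlying an order iso with `A`. -/
def emb : Fin (q + 1) →o Fin (N + 1) :=
  ⟨fun t => (e t : Fin (N + 1)), fun _ _ h => Subtype.coe_le_coe.mpr (e.monotone h)⟩

/-- The corresponding morphism `[q] ⟶ ⦋N⦌` in the simplex category. -/
def iotaHom : (⦋q⦌ : SimplexCategory) ⟶ ⦋N⦌ := SimplexCategory.Hom.mk (emb e)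

lemma iotaHom_toOrderHom_apply (t : Fin (q + 1)) :
    (iotaHom e).toOrderHom t = (e t : Fin (N + 1)) := rfl

/-- Image of a subset of `Fin (q+1)` in `Fin (N+1)`. -/
def eimage (r : Set (Fin (q + 1))) : Set (Fin (N + 1)) := (fun t => ((e t : Fin (N + 1)))) '' r

lemma eimage_subset (r : Set (Fin (q + 1))) : eimage e r ⊆ A := by
  rintro t ⟨s, -, rfl⟩; exact (e s).2

lemma eimage_injective : Function.Injective (eimage e) :=
  Function.Injective.image_injective (fun a b h => e.injective (Subtype.ext h))

lemma eimage_univ : eimage e Set.univ = A := by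
  ext t
  constructor
  · rintro ⟨s, -, rfl⟩; exact (e s).2
  · intro ht; exact ⟨e.symm ⟨t, ht⟩, trivial, by simp⟩

lemma eimage_univ_diff (j : Fin (q + 1)) :
    eimage e (Set.univ \ {j}) = A \ {(e j : Fin (N + 1))} := by
  ext t
  constructor
  · rintro ⟨s, ⟨-, hs⟩, rfl⟩
    refine ⟨(e s).2, fun h => hs ?_⟩
    rw [Set.mem_singleton_iff]
    exact e.injective (Subtype.ext (Set.mem_singleton_iff.1 h))
  · rintro ⟨ht, ht'⟩
    refine ⟨e.symm ⟨t, ht⟩, ⟨trivial, fun h => ht' ?_⟩, by simp⟩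
    have : e.symm ⟨t, ht⟩ = j := Set.mem_singleton_iff.1 h
    have := congrArg (fun s => (e s : Fin (N + 1))) this
    simp at this
    rw [Set.mem_singleton_iff, ← this]

lemma range_comp_toOrderHom {z : SimplexCategory} (g : z ⟶ ⦋q⦌) :
    Set.range (g ≫ iotaHom e).toOrderHom = eimage e (Set.range g.toOrderHom) := by
  rw [eimage, ← Set.range_comp]
  rfl

/-- Factorization of a map into `[N]` with range inside `A` through `[q]`. -/
def facHom {z : SimplexCategory} (g : z ⟶ ⦋N⦌) (h : Set.range g.toOrderHom ⊆ A) : z ⟶ ⦋q⦌ :=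
  SimplexCategory.Hom.mk
    ⟨fun t => e.symm ⟨g.toOrderHom t, h (Set.mem_range_self t)⟩,
     fun a b hab => e.symm.monotone (Subtype.mk_le_mk.mpr (g.toOrderHom.monotone hab))⟩

lemma facHom_iota {z : SimplexCategory} (g : z ⟶ ⦋N⦌) (h : Set.range g.toOrderHom ⊆ A) :
    facHom e g h ≫ iotaHom e = g := by
  apply SimplexCategory.Hom.ext
  apply OrderHom.ext
  funext t
  exact congrArg Subtype.val (e.apply_symm_apply ⟨g.toOrderHom t, h (Set.mem_range_self t)⟩)

lemma facHom_unique {z : SimplexCategory} (g : z ⟶ ⦋N⦌) (h : Set.range g.toOrderHom ⊆ A)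
    (γ : z ⟶ ⦋q⦌) (hγ : γ ≫ iotaHom e = g) : γ = facHom e g h := by
  apply SimplexCategory.Hom.ext
  apply OrderHom.ext
  funext t
  have : (e (γ.toOrderHom t) : Fin (N + 1)) = g.toOrderHom t := by
    rw [← hγ]; rfl
  have h2 : e (γ.toOrderHom t) = ⟨g.toOrderHom t, h (Set.mem_range_self t)⟩ := Subtype.ext this
  have := congrArg e.symm h2
  rwa [e.symm_apply_apply] at this

lemma facHom_comp {z z' : SimplexCategory} (w : z' ⟶ z) (g : z ⟶ ⦋N⦌)
    (h : Set.range g.toOrderHom ⊆ A) (h' : Set.range (w ≫ g).toOrderHom ⊆ A) :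
    facHom e (w ≫ g) h' = w ≫ facHom e g h := by
  apply SimplexCategory.Hom.ext
  apply OrderHom.ext
  funext t
  rfl

lemma facHom_of_iota (h : Set.range (iotaHom e).toOrderHom ⊆ A) :
    facHom e (iotaHom e) h = 𝟙 (SimplexCategory.mk q) := by
  apply SimplexCategory.Hom.ext
  apply OrderHom.ext
  funext t
  have : (⟨(iotaHom e).toOrderHom t, h (Set.mem_range_self t)⟩ : A) = e t := Subtype.ext rfl
  show e.symm ⟨(iotaHom e).toOrderHom t, h (Set.mem_range_self t)⟩ = t
  rw [this, e.symm_apply_apply]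

end Combinatorics

section Sub

variable {N : ℕ}

/-- A downward-closed family of nonempty subsets of `Fin (N+1)`, defining a subcomplex
of `Δ[N]`. -/
structure SClosed (N : ℕ) where
  mem : Set (Fin (N + 1)) → Prop
  down : ∀ ⦃A B : Set (Fin (N + 1))⦄, A ⊆ B → A.Nonempty → mem B → mem A

lemma range_map_subset {m₁ m₂ : SimplexCategoryᵒᵖ} (β : m₁ ⟶ m₂) (α : Δ[N].obj m₁) :
    Set.range (stdSimplex.asOrderHom ((Δ[N] : SSet.{v}).map β α)) ⊆ Set.range (stdSimplex.asOrderHom α) := by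
  rintro t ⟨s, rfl⟩
  exact Set.mem_range_self _

/-- The subcomplex of `Δ[N]` associated with a downward closed family. -/
def SClosed.sset (S : SClosed N) : SSet.{v} where
  obj m := { α : (Δ[N] : SSet.{v}).obj m // S.mem (Set.range (stdSimplex.asOrderHom α)) }
  map {m₁ m₂} β := TypeCat.ofHom fun α => ⟨Δ[N].map β α.1,
    S.down (range_map_subset β α.1) (Set.range_nonempty _) α.2⟩
  map_id m := by refine ConcreteCategory.hom_ext _ _ fun α => ?_; apply Subtype.ext; exact ConcreteCategory.congr_hom (Δ[N].map_id m) α.1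
  map_comp β γ := by refine ConcreteCategory.hom_ext _ _ fun α => ?_; apply Subtype.ext; exact ConcreteCategory.congr_hom (Δ[N].map_comp β γ) α.1

/-- The inclusion of the subcomplex into the standard simplex. -/
def SClosed.incl (S : SClosed N) : (S.sset : SSet.{v}) ⟶ Δ[N] where
  app m := TypeCat.ofHom fun α => α.1

/-- Inclusion between subcomplexes. -/
def SClosed.hom {S T : SClosed N} (h : ∀ A, S.mem A → T.mem A) :
    (S.sset : SSet.{v}) ⟶ T.sset where
  app m := TypeCat.ofHom fun α => ⟨α.1, h _ α.2⟩

lemma SClosed.hom_incl {S T : SClosed N} (h : ∀ A, S.mem A → T.mem A) :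
    (SClosed.hom h : (S.sset : SSet.{v}) ⟶ T.sset) ≫ T.incl = S.incl := rfl

end Sub

end CatCov

namespace CatCov

variable {C : Type u} [Category.{v} C]

lemma sHomRes_naturality {K L : SSet.{v}} (i : K ⟶ L)
    {F G : SimplicialObject (Cᵒᵖ ⥤ Type v)} (φ : F ⟶ G) :
    sHomMap L φ ≫ sHomRes i G = sHomRes i F ≫ sHomMap K φ := by
  apply NatTrans.ext; funext U; refine ConcreteCategory.hom_ext _ _ fun ξ => ?_; apply Subtype.ext; rfl

lemma restrictAlong_res {K L : SSet.{v}} (i : K ⟶ L) {n : SimplexCategory}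
    {ιK : K ⟶ SSet.stdSimplex.obj n} {ιL : L ⟶ SSet.stdSimplex.obj n}
    (hi : i ≫ ιL = ιK) (G : SimplicialObject (Cᵒᵖ ⥤ Type v)) :
    restrictAlong ιL G ≫ sHomRes i G = restrictAlong ιK G := by
  apply NatTrans.ext; funext U; refine ConcreteCategory.hom_ext _ _ fun y => ?_; apply Subtype.ext; funext m a
  have h := ConcreteCategory.congr_hom (NatTrans.congr_app hi m) a
  dsimp [restrictAlong, sHomRes, fromSimplex]
  exact congrArg (fun z => (G.map z.down.op).app U y) h

/-- Restriction of the relative object along a morphism of simplicial sets over `Δ[n]`. -/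
def resRel {K L : SSet.{v}} (i : K ⟶ L) {n : SimplexCategory}
    {ιK : K ⟶ SSet.stdSimplex.obj n} {ιL : L ⟶ SSet.stdSimplex.obj n}
    (hi : i ≫ ιL = ιK) {F G : SimplicialObject (Cᵒᵖ ⥤ Type v)} (φ : F ⟶ G) :
    relObj ιL φ ⟶ relObj ιK φ :=
  cpbMap (sHomRes i F) (𝟙 (G.obj (op n))) (sHomRes i G) (sHomRes_naturality i φ)
    (by rw [restrictAlong_res i hi G, Category.id_comp])

lemma resRel_snd {K L : SSet.{v}} (i : K ⟶ L) {n : SimplexCategory}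
    {ιK : K ⟶ SSet.stdSimplex.obj n} {ιL : L ⟶ SSet.stdSimplex.obj n}
    (hi : i ≫ ιL = ιK) {F G : SimplicialObject (Cᵒᵖ ⥤ Type v)} (φ : F ⟶ G) :
    resRel i hi φ ≫ cpbSnd _ _ = cpbSnd _ _ := by
  apply NatTrans.ext; funext U; refine ConcreteCategory.hom_ext _ _ fun p => ?_; rfl

lemma relMap_snd {K : SSet.{v}} {n : SimplexCategory} (ι : K ⟶ SSet.stdSimplex.obj n)
    {F G : SimplicialObject (Cᵒᵖ ⥤ Type v)} (φ : F ⟶ G) :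
    relMap ι φ ≫ cpbSnd _ _ = φ.app (op n) := by
  apply NatTrans.ext; funext U; refine ConcreteCategory.hom_ext _ _ fun x => ?_; rfl

/-- An isomorphism of simplicial sets over `Δ[n]` induces an isomorphism of relative objects. -/
def relIso {K L : SSet.{v}} (i : K ⟶ L) (i' : L ⟶ K) (h1 : i' ≫ i = 𝟙 L) (h2 : i ≫ i' = 𝟙 K)
    {n : SimplexCategory} {ιK : K ⟶ SSet.stdSimplex.obj n}
    {ιL : L ⟶ SSet.stdSimplex.obj n} (hi : i ≫ ιL = ιK)
    {F G : SimplicialObject (Cᵒᵖ ⥤ Type v)} (φ : F ⟶ G) :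
    relObj ιL φ ≅ relObj ιK φ where
  hom := resRel i hi φ
  inv := resRel i' (by rw [← hi, ← Category.assoc, h1, Category.id_comp]) φ
  hom_inv_id := by
    apply NatTrans.ext; funext U; refine ConcreteCategory.hom_ext _ _ fun p => ?_; apply Subtype.ext; apply Prod.ext
    · apply Subtype.ext; funext m a
      show p.1.1.1 m (i.app m (i'.app m a)) = p.1.1.1 m a
      rw [show i.app m (i'.app m a) = a from ConcreteCategory.congr_hom (NatTrans.congr_app h1 m) a]
    · rfl
  inv_hom_id := by
    apply NatTrans.ext; funext U; refine ConcreteCategory.hom_ext _ _ fun p => ?_; apply Subtype.ext; apply Prod.ext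
    · apply Subtype.ext; funext m a
      show p.1.1.1 m (i'.app m (i.app m a)) = p.1.1.1 m a
      rw [show i'.app m (i.app m a) = a from ConcreteCategory.congr_hom (NatTrans.congr_app h2 m) a]
    · rfl

end CatCov

namespace CatCov

open SSet Simplicial SimplexCategory

section CombExtra

variable {N q : ℕ} {A : Set (Fin (N + 1))} (e : Fin (q + 1) ≃o A)

lemma asOrderHom_objMk {m : SimplexCategoryᵒᵖ} (g : Fin ((unop m).len + 1) →o Fin (N + 1)) :
    stdSimplex.asOrderHom (SSet.stdSimplex.objMk g : (Δ[N] : SSet.{v}).obj m) = g := rfl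

end CombExtra

section Step

variable {C : Type u} [Category.{v} C] {X Y : SimplicialObject C} (f : X ⟶ Y)
variable {N q : ℕ} {A : Set (Fin (N + 1))} (e : Fin (q + 1) ≃o A) (j : Fin (q + 1))
variable {S S' : SClosed N}

lemma range_emb_eq {m : SimplexCategoryᵒᵖ} (h : m = op (SimplexCategory.mk q)) :
    True := trivial

/-- The canonical `q`-simplex with image `A` in a subcomplex containing `A`. -/
def iotaSimp {T : SClosed N} (hA : T.mem A) :
    (T.sset : SSet.{v}).obj (op (SimplexCategory.mk q)) :=
  ⟨SSet.stdSimplex.objMk (emb e), by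
    have h : Set.range (stdSimplex.asOrderHom (SSet.stdSimplex.objMk (emb e) :
        (Δ[N] : SSet.{v}).obj (op (SimplexCategory.mk q)))) = A := by
      ext t
      constructor
      · rintro ⟨s, rfl⟩; exact (e s).2
      · intro ht
        exact ⟨e.symm ⟨t, ht⟩, congrArg Subtype.val (e.apply_symm_apply ⟨t, ht⟩)⟩
    exact h.symm ▸ hA⟩

/-- Naturality helper: the value of a simplicial map on a simplex whose underlying map
factors through `ι_A`. -/
lemma val_eq_fac {T : SClosed N} (hA : T.mem A) {F : SimplicialObject (Cᵒᵖ ⥤ Type v)}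
    {U : Cᵒᵖ} (ξ : (sHom (T.sset : SSet.{v}) F).obj U) {m : SimplexCategoryᵒᵖ}
    (σ : (T.sset : SSet.{v}).obj m) (γ : (unop m) ⟶ SimplexCategory.mk q)
    (hγ : ULift.up.{v} (γ ≫ iotaHom e) = σ.1) :
    ξ.1 m σ = (F.map γ.op).app U (ξ.1 (op (SimplexCategory.mk q)) (iotaSimp e hA)) := by
  have h2 : (T.sset : SSet.{v}).map γ.op (iotaSimp e hA) = σ := Subtype.ext hγ
  rw [← h2]
  exact ξ.2 _ _ γ.op (iotaSimp e hA)

/-- Evaluation of the relative object at the canonical `A`-simplex. -/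
def evalAt {F G : SimplicialObject (Cᵒᵖ ⥤ Type v)}
    (φ : F ⟶ G) (hA : S'.mem A) :
    relObj (S'.incl : (SClosed.sset S' : SSet.{v}) ⟶ _) φ ⟶ F.obj (op (SimplexCategory.mk q)) where
  app U := TypeCat.ofHom fun p => p.1.1.1 (op (SimplexCategory.mk q)) (iotaSimp e hA)
  naturality U V u := by refine ConcreteCategory.hom_ext _ _ fun p => ?_; rfl

lemma mem_of_horn
    (hS : ∀ Cs : Set (Fin (N + 1)), Cs ⊆ A → Cs.Nonempty →
      (S.mem Cs ↔ (Cs ≠ A ∧ Cs ≠ A \ {(↑(e j) : Fin (N + 1))})))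
    {z : SimplexCategory} (g : z ⟶ SimplexCategory.mk q)
    (hg : Set.range g.toOrderHom ∪ {j} ≠ Set.univ) :
    S.mem (Set.range (g ≫ iotaHom e).toOrderHom) := by
  rw [range_comp_toOrderHom]
  refine (hS _ (eimage_subset e _) ((Set.range_nonempty _).image _)).mpr ?_
  rcases (union_singleton_ne_univ_iff _ j).1 hg with ⟨h1, h2⟩
  constructor
  · exact fun hh => h1 (eimage_injective e (by rw [hh, eimage_univ]))
  · exact fun hh => h2 (eimage_injective e (by rw [hh, eimage_univ_diff]))

/-- The map of simplicial sets from the horn into the subcomplex `S`, given the horn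
condition on `S`. -/
def hornIntoSub
    (hS : ∀ Cs : Set (Fin (N + 1)), Cs ⊆ A → Cs.Nonempty →
      (S.mem Cs ↔ (Cs ≠ A ∧ Cs ≠ A \ {(↑(e j) : Fin (N + 1))}))) :
    (Λ[q, j] : SSet.{v}) ⟶ (S.sset : SSet.{v}) where
  app m := TypeCat.ofHom fun β => ⟨(SSet.stdSimplex.objEquiv).symm (β.1.down ≫ iotaHom e),
    mem_of_horn e j hS β.1.down β.2⟩
  naturality m m' u := by
    refine ConcreteCategory.hom_ext _ _ fun β => ?_
    apply Subtype.ext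
    show ULift.up.{v} ((u.unop ≫ β.1.down) ≫ iotaHom e)
        = ULift.up.{v} (u.unop ≫ (β.1.down ≫ iotaHom e))
    rw [Category.assoc]

variable {hSdummy : True}

lemma restrictAlong_hornIntoSub
    (hS : ∀ Cs : Set (Fin (N + 1)), Cs ⊆ A → Cs.Nonempty →
      (S.mem Cs ↔ (Cs ≠ A ∧ Cs ≠ A \ {(↑(e j) : Fin (N + 1))})))
    (G : SimplicialObject (Cᵒᵖ ⥤ Type v)) :
    restrictAlong (S.incl : (SClosed.sset S : SSet.{v}) ⟶ _) G ≫ sHomRes (hornIntoSub e j hS) G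
      = G.map (iotaHom e).op ≫ restrictAlong ((SSet.horn q j).ι) G := by
  apply NatTrans.ext; funext U; refine ConcreteCategory.hom_ext _ _ fun y => ?_; apply Subtype.ext; funext m β
  show (G.map (β.1.down ≫ iotaHom e).op).app U y
      = (G.map β.1.down.op).app U ((G.map (iotaHom e).op).app U y)
  rw [op_comp, G.map_comp]
  rfl

/-- The comparison map from the relative object of `S` to the relative horn object. -/
def toHornObj
    (hS : ∀ Cs : Set (Fin (N + 1)), Cs ⊆ A → Cs.Nonempty →
      (S.mem Cs ↔ (Cs ≠ A ∧ Cs ≠ A \ {(↑(e j) : Fin (N + 1))})))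
    {F G : SimplicialObject (Cᵒᵖ ⥤ Type v)} (φ : F ⟶ G) :
    relObj (S.incl : (SClosed.sset S : SSet.{v}) ⟶ _) φ ⟶ hornObj q j φ :=
  cpbMap (sHomRes (hornIntoSub e j hS) F) (G.map (iotaHom e).op) (sHomRes (hornIntoSub e j hS) G)
    (sHomRes_naturality _ φ) (restrictAlong_hornIntoSub e j hS G)

/-- `S ⊆ S'`. -/
lemma step_sub
    (hS' : ∀ B, S'.mem B ↔ (S.mem B ∨ B = A ∨ B = A \ {(↑(e j) : Fin (N + 1))})) :
    ∀ B, S.mem B → S'.mem B := fun B h => (hS' B).2 (Or.inl h)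

lemma step_memA
    (hS' : ∀ B, S'.mem B ↔ (S.mem B ∨ B = A ∨ B = A \ {(↑(e j) : Fin (N + 1))})) :
    S'.mem A := (hS' A).2 (Or.inr (Or.inl rfl))

/-- The restriction map of relative objects for the inclusion `S ⊆ S'`. -/
def stepMap
    (hS' : ∀ B, S'.mem B ↔ (S.mem B ∨ B = A ∨ B = A \ {(↑(e j) : Fin (N + 1))}))
    {F G : SimplicialObject (Cᵒᵖ ⥤ Type v)} (φ : F ⟶ G) :
    relObj (S'.incl : (SClosed.sset S' : SSet.{v}) ⟶ _) φ ⟶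
      relObj (S.incl : (SClosed.sset S : SSet.{v}) ⟶ _) φ :=
  resRel (SClosed.hom (step_sub e j hS')) (SClosed.hom_incl _) φ

lemma step_comm
    (hS : ∀ Cs : Set (Fin (N + 1)), Cs ⊆ A → Cs.Nonempty →
      (S.mem Cs ↔ (Cs ≠ A ∧ Cs ≠ A \ {(↑(e j) : Fin (N + 1))})))
    (hS' : ∀ B, S'.mem B ↔ (S.mem B ∨ B = A ∨ B = A \ {(↑(e j) : Fin (N + 1))}))
    {F G : SimplicialObject (Cᵒᵖ ⥤ Type v)} (φ : F ⟶ G) :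
    stepMap e j hS' φ ≫ toHornObj e j hS φ
      = evalAt e φ (step_memA e j hS') ≫ hornMap q j φ := by
  apply NatTrans.ext; funext U; refine ConcreteCategory.hom_ext _ _ fun p => ?_; apply Subtype.ext; apply Prod.ext
  · apply Subtype.ext; funext m β
    exact p.1.1.2 (op (SimplexCategory.mk q)) m (β.1.down.op) (iotaSimp e (step_memA e j hS'))
  · exact (congrFun (congrFun (congrArg Subtype.val p.2) (op (SimplexCategory.mk q)))
      (iotaSimp e (step_memA e j hS'))).symm

end Step

end CatCov

namespace CatCov

open SSet Simplicial SimplexCategory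

section Ext

variable {C : Type u} [Category.{v} C]
variable {N q : ℕ} {A : Set (Fin (N + 1))} (e : Fin (q + 1) ≃o A) (j : Fin (q + 1))
variable {S S' : SClosed N}

lemma range_objMk_emb :
    Set.range (stdSimplex.asOrderHom (SSet.stdSimplex.objMk (emb e) :
      (Δ[N] : SSet.{v}).obj (op (SimplexCategory.mk q)))) = A := by
  ext t
  constructor
  · rintro ⟨s, rfl⟩; exact (e s).2
  · intro ht
    exact ⟨e.symm ⟨t, ht⟩, congrArg Subtype.val (e.apply_symm_apply ⟨t, ht⟩)⟩

lemma mem_of_not_subset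
    (hS' : ∀ B, S'.mem B ↔ (S.mem B ∨ B = A ∨ B = A \ {(↑(e j) : Fin (N + 1))}))
    {m : SimplexCategoryᵒᵖ} (σ : (SClosed.sset S' : SSet.{v}).obj m)
    (h : ¬ Set.range (stdSimplex.asOrderHom σ.1) ⊆ A) :
    S.mem (Set.range (stdSimplex.asOrderHom σ.1)) := by
  rcases (hS' _).1 σ.2 with hm | hm | hm
  · exact hm
  · exact absurd hm.le h
  · exact absurd (hm.le.trans (Set.diff_subset)) h

variable {F G : SimplicialObject (Cᵒᵖ ⥤ Type v)}

/-- The extension of a simplicial map on the subcomplex `S` to `S'` determined by a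
`q`-simplex filling the horn. -/
noncomputable def extFun
    (hS : ∀ Cs : Set (Fin (N + 1)), Cs ⊆ A → Cs.Nonempty →
      (S.mem Cs ↔ (Cs ≠ A ∧ Cs ≠ A \ {(↑(e j) : Fin (N + 1))})))
    (hS' : ∀ B, S'.mem B ↔ (S.mem B ∨ B = A ∨ B = A \ {(↑(e j) : Fin (N + 1))}))
    {U : Cᵒᵖ} (ξS : (sHom (SClosed.sset S : SSet.{v}) F).obj U)
    (x : (F.obj (op (SimplexCategory.mk q))).obj U)
    (m : SimplexCategoryᵒᵖ) (σ : (SClosed.sset S' : SSet.{v}).obj m) : (F.obj m).obj U :=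
  @dite _ (Set.range (stdSimplex.asOrderHom σ.1) ⊆ A) (Classical.dec _)
    (fun h => (F.map (facHom e σ.1.down h).op).app U x)
    (fun h => ξS.1 m ⟨σ.1, mem_of_not_subset e j hS' σ h⟩)

/-- Compatibility: on simplices of `S` inside `A`, the filling agrees with the given map. -/
lemma extFun_spec
    (hS : ∀ Cs : Set (Fin (N + 1)), Cs ⊆ A → Cs.Nonempty →
      (S.mem Cs ↔ (Cs ≠ A ∧ Cs ≠ A \ {(↑(e j) : Fin (N + 1))})))
    {U : Cᵒᵖ} (ξS : (sHom (SClosed.sset S : SSet.{v}) F).obj U)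
    (x : (F.obj (op (SimplexCategory.mk q))).obj U)
    (hι : ∀ (m : SimplexCategoryᵒᵖ) (β : (Λ[q, j] : SSet.{v}).obj m),
      ξS.1 m ((hornIntoSub e j hS).app m β) = (F.map β.1.down.op).app U x)
    {m : SimplexCategoryᵒᵖ} (σ₁ : (Δ[N] : SSet.{v}).obj m)
    (hmem : S.mem (Set.range (stdSimplex.asOrderHom σ₁)))
    (h : Set.range (stdSimplex.asOrderHom σ₁) ⊆ A) :
    ξS.1 m ⟨σ₁, hmem⟩ = (F.map (facHom e σ₁.down h).op).app U x := by
  set γ := facHom e σ₁.down h with hγdef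
  have hfac : γ ≫ iotaHom e = σ₁.down := facHom_iota e σ₁.down h
  have hrange : Set.range (stdSimplex.asOrderHom σ₁) = eimage e (Set.range γ.toOrderHom) := by
    rw [← range_comp_toOrderHom e γ]
    exact congrArg (fun z => Set.range z.toOrderHom) hfac.symm
  obtain ⟨ne1, ne2⟩ := (hS _ h (Set.range_nonempty _)).1 hmem
  have hhorn : Set.range γ.toOrderHom ∪ {j} ≠ Set.univ := by
    refine (union_singleton_ne_univ_iff _ j).2 ⟨?_, ?_⟩
    · intro hu; exact ne1 (by rw [hrange, hu, eimage_univ])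
    · intro hu; exact ne2 (by rw [hrange, hu, eimage_univ_diff])
  have key := hι m ⟨(SSet.stdSimplex.objEquiv).symm γ, hhorn⟩
  have hval : σ₁ = ULift.up.{v} (γ ≫ iotaHom e) := (congrArg ULift.up.{v} hfac).symm
  calc ξS.1 m ⟨σ₁, hmem⟩
      = ξS.1 m ((hornIntoSub e j hS).app m ⟨(SSet.stdSimplex.objEquiv).symm γ, hhorn⟩) :=
        congrArg (ξS.1 m) (Subtype.ext hval)
    _ = (F.map γ.op).app U x := key

lemma extFun_natural
    (hS : ∀ Cs : Set (Fin (N + 1)), Cs ⊆ A → Cs.Nonempty →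
      (S.mem Cs ↔ (Cs ≠ A ∧ Cs ≠ A \ {(↑(e j) : Fin (N + 1))})))
    (hS' : ∀ B, S'.mem B ↔ (S.mem B ∨ B = A ∨ B = A \ {(↑(e j) : Fin (N + 1))}))
    {U : Cᵒᵖ} (ξS : (sHom (SClosed.sset S : SSet.{v}) F).obj U)
    (x : (F.obj (op (SimplexCategory.mk q))).obj U)
    (hι : ∀ (m : SimplexCategoryᵒᵖ) (β : (Λ[q, j] : SSet.{v}).obj m),
      ξS.1 m ((hornIntoSub e j hS).app m β) = (F.map β.1.down.op).app U x)
    (m m' : SimplexCategoryᵒᵖ) (u : m ⟶ m') (σ : (SClosed.sset S' : SSet.{v}).obj m) :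
    extFun e j hS hS' ξS x m' ((SClosed.sset S' : SSet.{v}).map u σ)
      = (F.map u).app U (extFun e j hS hS' ξS x m σ) := by
  by_cases h : Set.range (stdSimplex.asOrderHom σ.1) ⊆ A
  · have h' : Set.range (stdSimplex.asOrderHom ((SClosed.sset S' : SSet.{v}).map u σ).1) ⊆ A :=
      (range_map_subset u σ.1).trans h
    simp only [extFun]
    rw [dif_pos h', dif_pos h]
    rw [show facHom e (((SClosed.sset S' : SSet.{v}).map u σ).1.down) h'
        = u.unop ≫ facHom e σ.1.down h from facHom_comp e u.unop σ.1.down h h']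
    rw [op_comp, Quiver.Hom.op_unop, F.map_comp]
    rfl
  · by_cases h' : Set.range (stdSimplex.asOrderHom ((SClosed.sset S' : SSet.{v}).map u σ).1) ⊆ A
    · simp only [extFun]
      rw [dif_pos h', dif_neg h]
      rw [← ξS.2 m m' u ⟨σ.1, mem_of_not_subset e j hS' σ h⟩]
      exact (extFun_spec e j hS ξS x hι _ _ h').symm
    · simp only [extFun]
      rw [dif_neg h', dif_neg h]
      exact ξS.2 m m' u ⟨σ.1, mem_of_not_subset e j hS' σ h⟩

/-- The extension as an element of `sHom`. -/
noncomputable def extend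
    (hS : ∀ Cs : Set (Fin (N + 1)), Cs ⊆ A → Cs.Nonempty →
      (S.mem Cs ↔ (Cs ≠ A ∧ Cs ≠ A \ {(↑(e j) : Fin (N + 1))})))
    (hS' : ∀ B, S'.mem B ↔ (S.mem B ∨ B = A ∨ B = A \ {(↑(e j) : Fin (N + 1))}))
    {U : Cᵒᵖ} (ξS : (sHom (SClosed.sset S : SSet.{v}) F).obj U)
    (x : (F.obj (op (SimplexCategory.mk q))).obj U)
    (hι : ∀ (m : SimplexCategoryᵒᵖ) (β : (Λ[q, j] : SSet.{v}).obj m),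
      ξS.1 m ((hornIntoSub e j hS).app m β) = (F.map β.1.down.op).app U x) :
    (sHom (SClosed.sset S' : SSet.{v}) F).obj U :=
  ⟨extFun e j hS hS' ξS x, fun m m' u σ => extFun_natural e j hS hS' ξS x hι m m' u σ⟩

end Ext

end CatCov

namespace CatCov

open SSet Simplicial SimplexCategory

section Bij

variable {C : Type u} [Category.{v} C]
variable {N q : ℕ} {A : Set (Fin (N + 1))} (e : Fin (q + 1) ≃o A) (j : Fin (q + 1))
variable {S S' : SClosed N}
variable {F G : SimplicialObject (Cᵒᵖ ⥤ Type v)}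

lemma extend_compat
    (hS : ∀ Cs : Set (Fin (N + 1)), Cs ⊆ A → Cs.Nonempty →
      (S.mem Cs ↔ (Cs ≠ A ∧ Cs ≠ A \ {(↑(e j) : Fin (N + 1))})))
    (hS' : ∀ B, S'.mem B ↔ (S.mem B ∨ B = A ∨ B = A \ {(↑(e j) : Fin (N + 1))}))
    (φ : F ⟶ G) {U : Cᵒᵖ} (ξS : (sHom (SClosed.sset S : SSet.{v}) F).obj U)
    (y : (G.obj (op (SimplexCategory.mk N))).obj U)
    (x : (F.obj (op (SimplexCategory.mk q))).obj U)
    (hι : ∀ (m : SimplexCategoryᵒᵖ) (β : (Λ[q, j] : SSet.{v}).obj m),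
      ξS.1 m ((hornIntoSub e j hS).app m β) = (F.map β.1.down.op).app U x)
    (c : (sHomMap (SClosed.sset S : SSet.{v}) φ).app U ξS
        = (restrictAlong (S.incl : (SClosed.sset S : SSet.{v}) ⟶ _) G).app U y)
    (hy : (G.map (iotaHom e).op).app U y = (φ.app (op (SimplexCategory.mk q))).app U x) :
    (sHomMap (SClosed.sset S' : SSet.{v}) φ).app U (extend e j hS hS' ξS x hι)
      = (restrictAlong (S'.incl : (SClosed.sset S' : SSet.{v}) ⟶ _) G).app U y := by
  apply Subtype.ext; funext m σ
  show (φ.app m).app U (extFun e j hS hS' ξS x m σ) = (G.map σ.1.down.op).app U y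
  by_cases h : Set.range (stdSimplex.asOrderHom σ.1) ⊆ A
  · simp only [extFun]; rw [dif_pos h]
    have nat := ConcreteCategory.congr_hom (NatTrans.congr_app (φ.naturality (facHom e σ.1.down h).op) U) x
    rw [show (φ.app m).app U ((F.map (facHom e σ.1.down h).op).app U x)
        = (G.map (facHom e σ.1.down h).op).app U ((φ.app (op (SimplexCategory.mk q))).app U x)
        from nat, ← hy]
    have hcomp : (G.map (iotaHom e).op ≫ G.map (facHom e σ.1.down h).op).app U y
        = (G.map σ.1.down.op).app U y := by
      rw [← G.map_comp, ← op_comp]; exact congrArg (fun z => (G.map (Quiver.Hom.op z)).app U y) (facHom_iota e σ.1.down h)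
    exact hcomp
  · simp only [extFun]; rw [dif_neg h]
    exact congrFun (congrFun (congrArg Subtype.val c) m) ⟨σ.1, mem_of_not_subset e j hS' σ h⟩

lemma step_isPullback
    (hS : ∀ Cs : Set (Fin (N + 1)), Cs ⊆ A → Cs.Nonempty →
      (S.mem Cs ↔ (Cs ≠ A ∧ Cs ≠ A \ {(↑(e j) : Fin (N + 1))})))
    (hS' : ∀ B, S'.mem B ↔ (S.mem B ∨ B = A ∨ B = A \ {(↑(e j) : Fin (N + 1))}))
    (φ : F ⟶ G) :
    IsPullback (stepMap e j hS' φ) (evalAt e φ (step_memA e j hS'))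
      (toHornObj e j hS φ) (hornMap q j φ) := by
  apply isPullback_of_bijective _ _ (step_comm e j hS hS' φ)
  intro U
  constructor
  · intro p₁ p₂ heq
    have hstep : (stepMap e j hS' φ).app U p₁ = (stepMap e j hS' φ).app U p₂ :=
      congrArg (fun z => (Subtype.val z).1) heq
    have hx : p₁.1.1.1 (op (SimplexCategory.mk q)) (iotaSimp e (step_memA e j hS'))
        = p₂.1.1.1 (op (SimplexCategory.mk q)) (iotaSimp e (step_memA e j hS')) :=
      congrArg (fun z => (Subtype.val z).2) heq
    have hy : p₁.1.2 = p₂.1.2 := congrArg (fun w => (Subtype.val w).2) hstep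
    have hξS : ∀ (m : SimplexCategoryᵒᵖ) (σ : (SClosed.sset S : SSet.{v}).obj m),
        p₁.1.1.1 m ⟨σ.1, step_sub e j hS' _ σ.2⟩ = p₂.1.1.1 m ⟨σ.1, step_sub e j hS' _ σ.2⟩ :=
      fun m σ =>
        congrFun (congrFun (congrArg (fun w => Subtype.val (Prod.fst (Subtype.val w))) hstep) m) σ
    apply Subtype.ext; apply Prod.ext
    · apply Subtype.ext; funext m σ
      by_cases h : Set.range (stdSimplex.asOrderHom σ.1) ⊆ A
      · have hγ : ULift.up.{v} (facHom e σ.1.down h ≫ iotaHom e) = σ.1 :=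
          congrArg ULift.up.{v} (facHom_iota e σ.1.down h)
        rw [val_eq_fac e (step_memA e j hS') p₁.1.1 σ _ hγ,
          val_eq_fac e (step_memA e j hS') p₂.1.1 σ _ hγ, hx]
      · exact hξS m ⟨σ.1, mem_of_not_subset e j hS' σ h⟩
    · exact hy
  · rintro ⟨⟨pS, x⟩, ht⟩
    have hι : ∀ (m : SimplexCategoryᵒᵖ) (β : (Λ[q, j] : SSet.{v}).obj m),
        pS.1.1.1 m ((hornIntoSub e j hS).app m β) = (F.map β.1.down.op).app U x :=
      fun m β =>
        congrFun (congrFun (congrArg (fun z => Subtype.val (Prod.fst (Subtype.val z))) ht) m) β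
    have hy2 : (G.map (iotaHom e).op).app U pS.1.2
        = (φ.app (op (SimplexCategory.mk q))).app U x :=
      congrArg (fun z => (Subtype.val z).2) ht
    refine ⟨⟨⟨extend e j hS hS' pS.1.1 x hι, pS.1.2⟩,
      extend_compat e j hS hS' φ pS.1.1 pS.1.2 x hι pS.2 hy2⟩, ?_⟩
    apply Subtype.ext; apply Prod.ext
    · apply Subtype.ext; apply Prod.ext
      · apply Subtype.ext; funext m σ
        show extFun e j hS hS' pS.1.1 x m ⟨σ.1, step_sub e j hS' _ σ.2⟩ = pS.1.1.1 m σ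
        by_cases h : Set.range (stdSimplex.asOrderHom σ.1) ⊆ A
        · simp only [extFun]; rw [dif_pos h]
          exact (extFun_spec e j hS pS.1.1 x hι σ.1 σ.2 h).symm
        · simp only [extFun]; rw [dif_neg h]; rfl
      · rfl
    · show extFun e j hS hS' pS.1.1 x (op (SimplexCategory.mk q))
          (iotaSimp e (step_memA e j hS')) = x
      have h0 : Set.range (stdSimplex.asOrderHom (iotaSimp e (step_memA e j hS')).1) ⊆ A :=
        (range_objMk_emb e).le
      simp only [extFun]; rw [dif_pos h0]
      show (F.map (facHom e (iotaHom e) h0).op).app U x = x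
      rw [facHom_of_iota e h0, op_id, F.map_id]
      rfl

/-- Chain step: if the horn-filling map is a representable cover and the projection of the
relative object of `S` is a representable cover, then so is that of `S'`. -/
lemma chain_step (cov : CoversOn C)
    (hS : ∀ Cs : Set (Fin (N + 1)), Cs ⊆ A → Cs.Nonempty →
      (S.mem Cs ↔ (Cs ≠ A ∧ Cs ≠ A \ {(↑(e j) : Fin (N + 1))})))
    (hS' : ∀ B, S'.mem B ↔ (S.mem B ∨ B = A ∨ B = A \ {(↑(e j) : Fin (N + 1))}))
    {φ : F ⟶ G} (hcov : RepCover cov (hornMap q j φ))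
    (hprev : RepCover cov (cpbSnd (sHomMap (SClosed.sset S : SSet.{v}) φ)
      (restrictAlong (S.incl : (SClosed.sset S : SSet.{v}) ⟶ _) G))) :
    RepCover cov (cpbSnd (sHomMap (SClosed.sset S' : SSet.{v}) φ)
      (restrictAlong (S'.incl : (SClosed.sset S' : SSet.{v}) ⟶ _) G)) := by
  obtain ⟨A₀, B₀, g₀, eA₀, eB₀, hg₀, hw₀⟩ := hprev
  have hsq := step_isPullback e j hS hS' φ
  have hstep : RepCover cov (stepMap e j hS' φ) := repCover_of_isPullback hsq hcov eA₀
  have hcomp := repCover_comp hstep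
    (⟨A₀, B₀, g₀, eA₀, eB₀, hg₀, hw₀⟩ : RepCover cov _)
  exact repCover_congr hcomp (resRel_snd _ _ φ)

end Bij

end CatCov

namespace CatCov

open SSet Simplicial SimplexCategory

section Base

variable {C : Type u} [Category.{v} C]
variable {N : ℕ}
variable {F G : SimplicialObject (Cᵒᵖ ⥤ Type v)}

/-- The subcomplex of `Δ[N]` consisting of the single vertex `i`. -/
def S0 (i : Fin (N + 1)) : SClosed N where
  mem B := B = {i}
  down := fun A B hAB hA hB => by
    rw [hB] at hAB
    exact Set.eq_singleton_iff_nonempty_unique_mem.mpr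
      ⟨hA, fun x hx => Set.mem_singleton_iff.1 (hAB hx)⟩

/-- The order iso of `Fin 1` with the singleton `{i}`. -/
def singletonIso (i : Fin (N + 1)) : Fin (0 + 1) ≃o ({i} : Set (Fin (N + 1))) where
  toFun _ := ⟨i, rfl⟩
  invFun _ := 0
  left_inv t := @Subsingleton.elim (Fin 1) _ _ _
  right_inv s := Subtype.ext (Set.mem_singleton_iff.1 s.2).symm
  map_rel_iff' := by
    intro a b
    constructor
    · intro _; exact le_of_eq (@Subsingleton.elim (Fin 1) _ a b)
    · intro _; exact le_refl _

lemma memA0 (i : Fin (N + 1)) : (S0 i).mem ({i} : Set (Fin (N + 1))) := rfl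

lemma range_sub0 {i : Fin (N + 1)} {m : SimplexCategoryᵒᵖ}
    (σ : (SClosed.sset (S0 i) : SSet.{v}).obj m) :
    Set.range (stdSimplex.asOrderHom σ.1) ⊆ ({i} : Set (Fin (N + 1))) := le_of_eq σ.2

/-- The vertex filling function. -/
noncomputable def extFun0 (i : Fin (N + 1)) {U : Cᵒᵖ}
    (x : (F.obj (op (SimplexCategory.mk 0))).obj U)
    (m : SimplexCategoryᵒᵖ) (σ : (SClosed.sset (S0 i) : SSet.{v}).obj m) : (F.obj m).obj U :=
  (F.map (facHom (singletonIso i) σ.1.down (range_sub0 σ)).op).app U x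

lemma extFun0_natural (i : Fin (N + 1)) {U : Cᵒᵖ}
    (x : (F.obj (op (SimplexCategory.mk 0))).obj U)
    (m m' : SimplexCategoryᵒᵖ) (u : m ⟶ m') (σ : (SClosed.sset (S0 i) : SSet.{v}).obj m) :
    extFun0 i x m' ((SClosed.sset (S0 i) : SSet.{v}).map u σ)
      = (F.map u).app U (extFun0 i x m σ) := by
  simp only [extFun0]
  rw [show facHom (singletonIso i) (((SClosed.sset (S0 i) : SSet.{v}).map u σ).1.down)
      (range_sub0 _) = u.unop ≫ facHom (singletonIso i) σ.1.down (range_sub0 σ) from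
    facHom_comp _ u.unop σ.1.down _ _]
  rw [op_comp, Quiver.Hom.op_unop, F.map_comp]
  rfl

/-- The pullback square for the base of the chain: the relative object of the vertex
subcomplex is the fiber product `G_N ×_{G_0} F_0`. -/
lemma base_isPullback (φ : F ⟶ G) (i : Fin (N + 1)) :
    IsPullback
      (cpbSnd (sHomMap (SClosed.sset (S0 i) : SSet.{v}) φ)
        (restrictAlong ((S0 i).incl : (SClosed.sset (S0 i) : SSet.{v}) ⟶ _) G))
      (evalAt (singletonIso i) φ (memA0 i))
      (G.map (iotaHom (singletonIso i)).op)
      (φ.app (op (SimplexCategory.mk 0))) := by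
  have comm : cpbSnd (sHomMap (SClosed.sset (S0 i) : SSet.{v}) φ)
        (restrictAlong ((S0 i).incl : (SClosed.sset (S0 i) : SSet.{v}) ⟶ _) G)
        ≫ G.map (iotaHom (singletonIso i)).op
      = evalAt (singletonIso i) φ (memA0 i) ≫ φ.app (op (SimplexCategory.mk 0)) := by
    apply NatTrans.ext; funext U; refine ConcreteCategory.hom_ext _ _ fun p => ?_
    exact (congrFun (congrFun (congrArg Subtype.val p.2) (op (SimplexCategory.mk 0)))
      (iotaSimp (singletonIso i) (memA0 i))).symm
  apply isPullback_of_bijective _ _ comm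
  intro U
  constructor
  · intro p₁ p₂ heq
    have hy : p₁.1.2 = p₂.1.2 := congrArg (fun z => (Subtype.val z).1) heq
    have hx : p₁.1.1.1 (op (SimplexCategory.mk 0)) (iotaSimp (singletonIso i) (memA0 i))
        = p₂.1.1.1 (op (SimplexCategory.mk 0)) (iotaSimp (singletonIso i) (memA0 i)) :=
      congrArg (fun z => (Subtype.val z).2) heq
    apply Subtype.ext; apply Prod.ext
    · apply Subtype.ext; funext m σ
      have hγ : ULift.up.{v} (facHom (singletonIso i) σ.1.down (range_sub0 σ)
          ≫ iotaHom (singletonIso i)) = σ.1 :=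
        congrArg ULift.up.{v} (facHom_iota _ σ.1.down (range_sub0 σ))
      rw [val_eq_fac (singletonIso i) (memA0 i) p₁.1.1 σ _ hγ,
        val_eq_fac (singletonIso i) (memA0 i) p₂.1.1 σ _ hγ, hx]
    · exact hy
  · rintro ⟨⟨y, x⟩, ht⟩
    have hty : (G.map (iotaHom (singletonIso i)).op).app U y
        = (φ.app (op (SimplexCategory.mk 0))).app U x := ht
    have compat : (sHomMap (SClosed.sset (S0 i) : SSet.{v}) φ).app U
          ⟨extFun0 i x, fun m m' u σ => extFun0_natural i x m m' u σ⟩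
        = (restrictAlong ((S0 i).incl : (SClosed.sset (S0 i) : SSet.{v}) ⟶ _) G).app U y := by
      apply Subtype.ext; funext m σ
      show (φ.app m).app U (extFun0 i x m σ) = (G.map σ.1.down.op).app U y
      simp only [extFun0]
      have nat := ConcreteCategory.congr_hom (NatTrans.congr_app
        (φ.naturality (facHom (singletonIso i) σ.1.down (range_sub0 σ)).op) U) x
      rw [show (φ.app m).app U
          ((F.map (facHom (singletonIso i) σ.1.down (range_sub0 σ)).op).app U x)
          = (G.map (facHom (singletonIso i) σ.1.down (range_sub0 σ)).op).app U
            ((φ.app (op (SimplexCategory.mk 0))).app U x) from nat, ← hty]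
      have hcomp : (G.map (iotaHom (singletonIso i)).op
            ≫ G.map (facHom (singletonIso i) σ.1.down (range_sub0 σ)).op).app U y
          = (G.map σ.1.down.op).app U y := by
        rw [← G.map_comp, ← op_comp]; exact congrArg (fun z => (G.map (Quiver.Hom.op z)).app U y) (facHom_iota _ σ.1.down (range_sub0 σ))
      exact hcomp
    refine ⟨⟨⟨⟨extFun0 i x, fun m m' u σ => extFun0_natural i x m m' u σ⟩, y⟩, compat⟩, ?_⟩
    apply Subtype.ext; apply Prod.ext
    · rfl
    · show extFun0 i x (op (SimplexCategory.mk 0)) (iotaSimp (singletonIso i) (memA0 i)) = x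
      simp only [extFun0]
      show (F.map (facHom (singletonIso i) (iotaHom (singletonIso i)) _).op).app U x = x
      exact (congrArg (fun z => (F.map (Quiver.Hom.op z)).app U x) (facHom_of_iota (singletonIso i) _)).trans (by rw [op_id, F.map_id]; rfl)

/-- Base of the chain: the projection from the relative object of the vertex subcomplex
is a representable cover provided `φ₀` is. -/
lemma chain_base (cov : CoversOn C) {φ : F ⟶ G} (i : Fin (N + 1))
    (hw : RepCover cov (φ.app (op (SimplexCategory.mk 0))))
    {B' : C} (eG : yoneda.obj B' ≅ G.obj (op (SimplexCategory.mk N))) :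
    RepCover cov (cpbSnd (sHomMap (SClosed.sset (S0 i) : SSet.{v}) φ)
      (restrictAlong ((S0 i).incl : (SClosed.sset (S0 i) : SSet.{v}) ⟶ _) G)) :=
  repCover_of_isPullback (base_isPullback φ i) hw eG

end Base

end CatCov

namespace CatCov

open SSet Simplicial SimplexCategory

section Chain

variable {C : Type u} [Category.{v} C]
variable {N : ℕ}
variable {F G : SimplicialObject (Cᵒᵖ ⥤ Type v)}

lemma repCover_snd_transport (cov : CoversOn C) {K L : SSet.{v}} (i₁ : K ⟶ L) (i₂ : L ⟶ K)
    (h1 : i₂ ≫ i₁ = 𝟙 L) (h2 : i₁ ≫ i₂ = 𝟙 K) {n : SimplexCategory}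
    {ιK : K ⟶ SSet.stdSimplex.obj n} {ιL : L ⟶ SSet.stdSimplex.obj n}
    (hi : i₁ ≫ ιL = ιK) {φ : F ⟶ G}
    (h : RepCover cov (cpbSnd (sHomMap L φ) (restrictAlong ιL G))) :
    RepCover cov (cpbSnd (sHomMap K φ) (restrictAlong ιK G)) := by
  have hi2 : i₂ ≫ ιK = ιL := by rw [← hi, ← Category.assoc, h1, Category.id_comp]
  obtain ⟨A₀, B₀, g₀, eA₀, eB₀, hg₀, hw₀⟩ := h
  have hinv1 : resRel i₂ hi2 φ ≫ resRel i₁ hi φ = 𝟙 _ := by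
    apply NatTrans.ext; funext U; refine ConcreteCategory.hom_ext _ _ fun p => ?_; apply Subtype.ext; apply Prod.ext
    · apply Subtype.ext; funext m a
      show p.1.1.1 m (i₂.app m (i₁.app m a)) = p.1.1.1 m a
      rw [show i₂.app m (i₁.app m a) = a from ConcreteCategory.congr_hom (NatTrans.congr_app h2 m) a]
    · rfl
  have hinv2 : resRel i₁ hi φ ≫ resRel i₂ hi2 φ = 𝟙 _ := by
    apply NatTrans.ext; funext U; refine ConcreteCategory.hom_ext _ _ fun p => ?_; apply Subtype.ext; apply Prod.ext
    · apply Subtype.ext; funext m a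
      show p.1.1.1 m (i₁.app m (i₂.app m a)) = p.1.1.1 m a
      rw [show i₁.app m (i₂.app m a) = a from ConcreteCategory.congr_hom (NatTrans.congr_app h1 m) a]
    · rfl
  haveI : IsIso (resRel i₂ hi2 φ) := ⟨resRel i₁ hi φ, hinv1, hinv2⟩
  have hrep : RepCover cov (resRel i₂ hi2 φ) := repCover_of_isIso _ eA₀
  have hcomp := repCover_comp hrep
    (⟨A₀, B₀, g₀, eA₀, eB₀, hg₀, hw₀⟩ : RepCover cov _)
  exact repCover_congr hcomp (resRel_snd i₂ hi2 φ)

lemma repCover_snd_congr (cov : CoversOn C) {S T : SClosed N}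
    (h : ∀ Cs, T.mem Cs ↔ S.mem Cs) {φ : F ⟶ G}
    (hS : RepCover cov (cpbSnd (sHomMap (SClosed.sset S : SSet.{v}) φ)
      (restrictAlong (S.incl : (SClosed.sset S : SSet.{v}) ⟶ _) G))) :
    RepCover cov (cpbSnd (sHomMap (SClosed.sset T : SSet.{v}) φ)
      (restrictAlong (T.incl : (SClosed.sset T : SSet.{v}) ⟶ _) G)) := by
  refine repCover_snd_transport cov (SClosed.hom (fun A hA => (h A).1 hA))
    (SClosed.hom (fun A hA => (h A).2 hA)) ?_ ?_ (SClosed.hom_incl _) hS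
  · apply NatTrans.ext; funext m; refine ConcreteCategory.hom_ext _ _ fun σ => ?_; rfl
  · apply NatTrans.ext; funext m; refine ConcreteCategory.hom_ext _ _ fun σ => ?_; rfl

/-- The subcomplex determined by the family `R` of "B"-sets: it contains the vertex `i`,
each `B ∈ R` and each cone `B ∪ {i}`. -/
def chainS (i : Fin (N + 1)) (R : Set (Set (Fin (N + 1))))
    (hR2 : ∀ B ∈ R, ∀ Cs, Cs ⊆ B → Cs.Nonempty → Cs ∈ R) : SClosed N where
  mem D := D = {i} ∨ ∃ B ∈ R, D = B ∨ D = B ∪ {i}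
  down := by
    intro D E hsub hne hmem
    rcases hmem with h | ⟨B, hB, h | h⟩
    · left
      rw [h] at hsub
      exact Set.eq_singleton_iff_nonempty_unique_mem.mpr
        ⟨hne, fun x hx => Set.mem_singleton_iff.1 (hsub hx)⟩
    · rw [h] at hsub
      exact Or.inr ⟨D, hR2 B hB D hsub hne, Or.inl rfl⟩
    · rw [h] at hsub
      by_cases hD : (D \ {i}).Nonempty
      · have hDB : D \ {i} ⊆ B := by
          rintro x ⟨hx, hxi⟩
          rcases hsub hx with hb | hi'
          · exact hb
          · exact absurd hi' hxi
        have hmemR : D \ {i} ∈ R := hR2 B hB _ hDB hD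
        by_cases hiD : i ∈ D
        · refine Or.inr ⟨D \ {i}, hmemR, Or.inr ?_⟩
          rw [Set.diff_union_self]
          exact (Set.union_eq_self_of_subset_right (Set.singleton_subset_iff.2 hiD)).symm
        · exact Or.inr ⟨D \ {i}, hmemR, Or.inl (Set.diff_singleton_eq_self hiD).symm⟩
      · left
        have hsingle : D ⊆ {i} := by
          intro x hx
          by_contra hxi
          exact hD ⟨x, hx, hxi⟩
        exact Set.eq_singleton_iff_nonempty_unique_mem.mpr
          ⟨hne, fun x hx => Set.mem_singleton_iff.1 (hsingle hx)⟩

/-- Order isomorphism of a finite set of given cardinality with `Fin`. -/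
noncomputable def finOrderIso (A : Set (Fin (N + 1))) (k : ℕ) (h : A.ncard = k + 1) :
    Fin (k + 1) ≃o A := by
  have hfin : A.Finite := Set.toFinite A
  have hcard : hfin.toFinset.card = k + 1 := by
    rw [← Set.ncard_eq_toFinset_card A hfin]
    exact h
  exact (hfin.toFinset.orderIsoOfFin hcard).trans
    (OrderIso.setCongr _ _ hfin.coe_toFinset)

end Chain

end CatCov

namespace CatCov

open SSet Simplicial SimplexCategory

section ChainAll

variable {C : Type u} [Category.{v} C]
variable {N : ℕ}
variable {F G : SimplicialObject (Cᵒᵖ ⥤ Type v)}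

lemma chain_all (cov : CoversOn C) {φ : F ⟶ G}
    (hKan : ∀ (k : ℕ) (j' : Fin (k + 2)), RepCover cov (hornMap (k + 1) j' φ))
    (h0 : RepCover cov (φ.app (op (SimplexCategory.mk 0))))
    {B' : C} (eG : yoneda.obj B' ≅ G.obj (op (SimplexCategory.mk N)))
    (i : Fin (N + 1)) :
    ∀ (n : ℕ) (R : Set (Set (Fin (N + 1)))), R.ncard ≤ n →
      ∀ (hR1 : ∀ B ∈ R, B.Nonempty ∧ i ∉ B ∧ B ∪ {i} ≠ Set.univ)
      (hR2 : ∀ B ∈ R, ∀ Cs, Cs ⊆ B → Cs.Nonempty → Cs ∈ R),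
      RepCover cov (cpbSnd (sHomMap (SClosed.sset (chainS i R hR2) : SSet.{v}) φ)
        (restrictAlong
          ((chainS i R hR2).incl : (SClosed.sset (chainS i R hR2) : SSet.{v}) ⟶ _) G)) := by
  have hdiffgen : ∀ (D : Set (Fin (N + 1))), i ∉ D → (D ∪ {i}) \ {i} = D := by
    intro D hD
    ext x
    constructor
    · rintro ⟨hx, hxi⟩
      rcases hx with hb | hi'
      · exact hb
      · exact absurd hi' hxi
    · intro hx
      exact ⟨Or.inl hx, fun hxi => hD (by rwa [Set.mem_singleton_iff.1 hxi] at hx)⟩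
  intro n
  induction n with
  | zero =>
    intro R hcard hR1 hR2
    have hRe : R = ∅ := (Set.ncard_eq_zero (Set.toFinite R)).1 (Nat.le_zero.mp hcard)
    subst hRe
    refine repCover_snd_congr cov ?_ (chain_base cov i h0 eG)
    intro Cs
    constructor
    · rintro (h | ⟨B, hB, -⟩)
      · exact h
      · exact absurd hB (Set.notMem_empty B)
    · intro h; exact Or.inl h
  | succ n IH =>
    intro R hcard hR1 hR2
    by_cases hle : R.ncard ≤ n
    · exact IH R hle hR1 hR2
    · rcases Set.eq_empty_or_nonempty R with hR0 | hne
      · exact absurd (by rw [hR0, Set.ncard_empty]; exact Nat.zero_le n) hle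
      obtain ⟨B, hBR, hmax⟩ :=
        Set.Finite.exists_maximalFor Set.ncard R (Set.toFinite R) hne
      have hBne : B.Nonempty := (hR1 B hBR).1
      have hiB : i ∉ B := (hR1 B hBR).2.1
      obtain ⟨m, hm⟩ : ∃ m, B.ncard = m + 1 := by
        have := (Set.ncard_pos (Set.toFinite B)).2 hBne
        exact ⟨B.ncard - 1, by omega⟩
      have hiA : i ∈ B ∪ ({i} : Set (Fin (N + 1))) := Set.mem_union_right _ rfl
      have hAcard : (B ∪ ({i} : Set (Fin (N + 1)))).ncard = (m + 1) + 1 := by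
        rw [Set.union_singleton, Set.ncard_insert_of_notMem hiB (Set.toFinite B), hm]
      have hAdiff : (B ∪ ({i} : Set (Fin (N + 1)))) \ {i} = B := hdiffgen B hiB
      have hmax' : ∀ B'' ∈ R, ¬ (B ⊂ B'') := by
        intro B'' hB'' hss
        have hlt : B.ncard < B''.ncard := Set.ncard_lt_ncard hss (Set.toFinite B'')
        have := hmax hB'' (le_of_lt hlt)
        omega
      have hR1' : ∀ Bx ∈ R \ {B}, Bx.Nonempty ∧ i ∉ Bx ∧ Bx ∪ {i} ≠ Set.univ :=
        fun Bx hBx => hR1 Bx hBx.1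
      have hR2' : ∀ Bx ∈ R \ {B}, ∀ Cs, Cs ⊆ Bx → Cs.Nonempty → Cs ∈ R \ {B} := by
        intro Bx hBx Cs hsub hne'
        refine ⟨hR2 Bx hBx.1 Cs hsub hne', ?_⟩
        intro hCs
        have hCsB : Cs = B := hCs
        have hBBx : B ⊆ Bx := hCsB ▸ hsub
        exact hmax' Bx hBx.1 ((Set.ssubset_iff_subset_ne).2 ⟨hBBx, Ne.symm hBx.2⟩)
      have hcard' : (R \ {B}).ncard ≤ n := by
        rw [Set.ncard_diff_singleton_of_mem hBR]
        omega
      have IH' := IH (R \ {B}) hcard' hR1' hR2'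
      have e := finOrderIso (B ∪ ({i} : Set (Fin (N + 1)))) (m + 1) hAcard
      have hej : (↑(e (e.symm ⟨i, hiA⟩)) : Fin (N + 1)) = i := by
        rw [OrderIso.apply_symm_apply]
      have hS : ∀ Cs : Set (Fin (N + 1)), Cs ⊆ B ∪ ({i} : Set (Fin (N + 1))) → Cs.Nonempty →
          ((chainS i (R \ {B}) hR2').mem Cs ↔
            (Cs ≠ B ∪ ({i} : Set (Fin (N + 1)))
              ∧ Cs ≠ (B ∪ ({i} : Set (Fin (N + 1)))) \ {(↑(e (e.symm ⟨i, hiA⟩)) : Fin (N + 1))})) := by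
        rw [hej, hAdiff]
        intro Cs hsub hne'
        constructor
        · rintro (h | ⟨Bx, hBx, h | h⟩)
          · rw [h]
            constructor
            · intro hEq
              obtain ⟨b, hb⟩ := hBne
              have hb' : b ∈ ({i} : Set (Fin (N + 1))) := by rw [hEq]; exact Or.inl hb
              exact hiB (Set.mem_singleton_iff.1 hb' ▸ hb)
            · intro hEq
              exact hiB (by rw [← hEq]; exact rfl)
          · rw [h]
            constructor
            · intro hEq
              exact (hR1' Bx hBx).2.1 (by rw [hEq]; exact hiA)
            · intro hEq
              exact hBx.2 hEq
          · rw [h]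
            constructor
            · intro hEq
              apply hBx.2
              have hBxi : i ∉ Bx := (hR1' Bx hBx).2.1
              have hstep := congrArg (fun z => z \ ({i} : Set (Fin (N + 1)))) hEq
              rwa [hdiffgen Bx hBxi, hAdiff] at hstep
            · intro hEq
              exact hiB (by rw [← hEq]; exact Set.mem_union_right _ rfl)
        · rintro ⟨hneA, hneB⟩
          by_cases hiCs : i ∈ Cs
          · by_cases hCs' : (Cs \ {i}).Nonempty
            · have hsubB : Cs \ {i} ⊆ B := by
                rintro x ⟨hx, hxi⟩
                rcases hsub hx with hb | hi'
                · exact hb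
                · exact absurd hi' hxi
              have hCseq : Cs = (Cs \ {i}) ∪ {i} := by
                rw [Set.diff_union_self]
                exact (Set.union_eq_self_of_subset_right
                  (Set.singleton_subset_iff.2 hiCs)).symm
              have hCsd : Cs \ {i} ≠ B := by
                intro hEq
                exact hneA (hCseq.trans (by rw [hEq]))
              refine Or.inr ⟨Cs \ {i}, ⟨hR2 B hBR _ hsubB hCs', hCsd⟩, Or.inr hCseq⟩
            · left
              have hsingle : Cs ⊆ {i} := by
                intro x hx
                by_contra hxi
                exact hCs' ⟨x, hx, hxi⟩
              exact Set.eq_singleton_iff_nonempty_unique_mem.mpr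
                ⟨hne', fun x hx => Set.mem_singleton_iff.1 (hsingle hx)⟩
          · have hsubB : Cs ⊆ B := by
              intro x hx
              rcases hsub hx with hb | hi'
              · exact hb
              · exact absurd (Set.mem_singleton_iff.1 hi') (fun hEq => hiCs (hEq ▸ hx))
            exact Or.inr ⟨Cs, ⟨hR2 B hBR _ hsubB hne', hneB⟩, Or.inl rfl⟩
      have hS' : ∀ D, (chainS i R hR2).mem D ↔
          ((chainS i (R \ {B}) hR2').mem D ∨ D = B ∪ ({i} : Set (Fin (N + 1)))
            ∨ D = (B ∪ ({i} : Set (Fin (N + 1)))) \ {(↑(e (e.symm ⟨i, hiA⟩)) : Fin (N + 1))}) := by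
        rw [hej, hAdiff]
        intro D
        constructor
        · rintro (h | ⟨Bx, hBx, h | h⟩)
          · exact Or.inl (Or.inl h)
          · by_cases hBxB : Bx = B
            · subst hBxB; exact Or.inr (Or.inr h)
            · exact Or.inl (Or.inr ⟨Bx, ⟨hBx, hBxB⟩, Or.inl h⟩)
          · by_cases hBxB : Bx = B
            · subst hBxB; exact Or.inr (Or.inl h)
            · exact Or.inl (Or.inr ⟨Bx, ⟨hBx, hBxB⟩, Or.inr h⟩)
        · rintro ((h | ⟨Bx, hBx, h⟩) | h | h)
          · exact Or.inl h
          · exact Or.inr ⟨Bx, hBx.1, h⟩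
          · exact Or.inr ⟨B, hBR, Or.inr h⟩
          · exact Or.inr ⟨B, hBR, Or.inl h⟩
      exact chain_step e (e.symm ⟨i, hiA⟩) cov hS hS' (hKan m (e.symm ⟨i, hiA⟩)) IH'

end ChainAll

end CatCov

namespace CatCov

open SSet Simplicial SimplexCategory

section Final

variable {C : Type u} [Category.{v} C]
variable {N : ℕ}
variable {F G : SimplicialObject (Cᵒᵖ ⥤ Type v)}

lemma union_ne_univ_of_subset {i : Fin (N + 1)} {D E : Set (Fin (N + 1))} (h : D ⊆ E)
    (hE : E ∪ {i} ≠ Set.univ) : D ∪ {i} ≠ Set.univ := fun hD =>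
  hE (Set.eq_univ_of_univ_subset (hD ▸ Set.union_subset_union_left {i} h))

/-- The horn, as a downward-closed family. -/
def Shorn (i : Fin (N + 1)) : SClosed N where
  mem D := D.Nonempty ∧ D ∪ {i} ≠ Set.univ
  down := fun D E hsub hne hE => ⟨hne, union_ne_univ_of_subset hsub hE.2⟩

/-- Comparison with mathlib's horn. -/
def hornToShorn (i : Fin (N + 1)) : (Λ[N, i] : SSet.{v}) ⟶ (SClosed.sset (Shorn i) : SSet.{v}) where
  app m := TypeCat.ofHom fun β => ⟨β.1, ⟨Set.range_nonempty _, β.2⟩⟩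
  naturality m m' u := by refine ConcreteCategory.hom_ext _ _ fun β => ?_; apply Subtype.ext; rfl

def shornToHorn (i : Fin (N + 1)) : (SClosed.sset (Shorn i) : SSet.{v}) ⟶ (Λ[N, i] : SSet.{v}) where
  app m := TypeCat.ofHom fun σ => ⟨σ.1, σ.2.2⟩
  naturality m m' u := by refine ConcreteCategory.hom_ext _ _ fun σ => ?_; apply Subtype.ext; rfl

lemma repCover_snd_horn (cov : CoversOn C) {φ : F ⟶ G} (i : Fin (N + 1))
    (h : RepCover cov (cpbSnd (sHomMap (SClosed.sset (Shorn i) : SSet.{v}) φ)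
      (restrictAlong ((Shorn i).incl : (SClosed.sset (Shorn i) : SSet.{v}) ⟶ _) G))) :
    RepCover cov (cpbSnd (sHomMap (Λ[N, i] : SSet.{v}) φ)
      (restrictAlong ((SSet.horn N i).ι) G)) := by
  refine repCover_snd_transport cov (hornToShorn i) (shornToHorn i) ?_ ?_ ?_ h
  · apply NatTrans.ext; funext m; refine ConcreteCategory.hom_ext _ _ fun σ => ?_; apply Subtype.ext; rfl
  · apply NatTrans.ext; funext m; refine ConcreteCategory.hom_ext _ _ fun β => ?_; apply Subtype.ext; rfl
  · apply NatTrans.ext; funext m; refine ConcreteCategory.hom_ext _ _ fun β => ?_; rfl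

end Final

end CatCov

open CatCov in
/-- Let `C` be a category with covers and `f : X ⟶ Y` a covering Kan fibration
in `sC` (a Kan fibration such that `f₀ : X₀ ⟶ Y₀` is a cover).  Then for all `n > 0` the map
`fₙ : Xₙ ⟶ Yₙ` is a cover in `C`. -/
theorem stmt_8 {C : Type u} [Category.{v} C] (cov : CoversOn C)
    {X Y : SimplicialObject C} (f : X ⟶ Y)
    (hf : IsKanFibration cov (evMap f))
    (hf0 : cov.isCover (f.app (op (SimplexCategory.mk 0)))) :
    ∀ n : ℕ, 0 < n → cov.isCover (f.app (op (SimplexCategory.mk n))) := by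
  intro n hn
  obtain ⟨m, rfl⟩ : ∃ m, n = m + 1 := ⟨n - 1, by omega⟩
  set i : Fin (m + 2) := 0 with hidef
  have h0 : RepCover cov ((evMap f).app (op (SimplexCategory.mk 0))) :=
    repCover_yoneda_map hf0
  have eG : yoneda.obj (Y.obj (op (SimplexCategory.mk (m + 1))))
      ≅ (ev Y).obj (op (SimplexCategory.mk (m + 1))) := Iso.refl _
  have hR1full : ∀ B ∈ ({B | B.Nonempty ∧ i ∉ B ∧ B ∪ {i} ≠ Set.univ} : Set (Set (Fin (m + 2)))),
      B.Nonempty ∧ i ∉ B ∧ B ∪ {i} ≠ Set.univ := fun B hB => hB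
  have hR2full : ∀ B ∈ ({B | B.Nonempty ∧ i ∉ B ∧ B ∪ {i} ≠ Set.univ} : Set (Set (Fin (m + 2)))),
      ∀ Cs, Cs ⊆ B → Cs.Nonempty →
        Cs ∈ ({B | B.Nonempty ∧ i ∉ B ∧ B ∪ {i} ≠ Set.univ} : Set (Set (Fin (m + 2)))) := by
    intro B hB Cs hsub hne
    exact ⟨hne, fun hiCs => hB.2.1 (hsub hiCs),
      union_ne_univ_of_subset hsub hB.2.2⟩
  have hchain := chain_all cov hf h0 eG i _ _ (le_refl _) hR1full hR2full
  have hti : ∃ t : Fin (m + 2), t ≠ i := by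
    refine ⟨1, ?_⟩
    intro h
    have := congrArg Fin.val h
    simp [hidef, Fin.val_one] at this
  have hequiv : ∀ Cs, (Shorn i).mem Cs ↔
      (chainS i ({B | B.Nonempty ∧ i ∉ B ∧ B ∪ {i} ≠ Set.univ} : Set (Set (Fin (m + 2))))
        hR2full).mem Cs := by
    intro D
    constructor
    · rintro ⟨hne, hD⟩
      by_cases hiD : i ∈ D
      · by_cases hD' : (D \ {i}).Nonempty
        · have hmem : D \ {i} ∈ ({B |
              B.Nonempty ∧ i ∉ B ∧ B ∪ {i} ≠ Set.univ} : Set (Set (Fin (m + 2)))) := by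
            refine ⟨hD', fun hc => hc.2 rfl, ?_⟩
            rw [Set.diff_union_self]
            exact hD
          refine Or.inr ⟨D \ {i}, hmem, Or.inr ?_⟩
          rw [Set.diff_union_self]
          exact (Set.union_eq_self_of_subset_right
            (Set.singleton_subset_iff.2 hiD)).symm
        · left
          have hsingle : D ⊆ {i} := by
            intro x hx
            by_contra hxi
            exact hD' ⟨x, hx, hxi⟩
          exact Set.eq_singleton_iff_nonempty_unique_mem.mpr
            ⟨hne, fun x hx => Set.mem_singleton_iff.1 (hsingle hx)⟩
      · exact Or.inr ⟨D, ⟨hne, hiD, hD⟩, Or.inl rfl⟩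
    · rintro (h | ⟨B, hB, h | h⟩)
      · subst h
        refine ⟨Set.singleton_nonempty i, ?_⟩
        rw [Set.union_self]
        intro hc
        obtain ⟨t, ht⟩ := hti
        exact ht (Set.mem_singleton_iff.1 (hc ▸ (Set.mem_univ t)))
      · subst h
        exact ⟨hB.1, hB.2.2⟩
      · subst h
        refine ⟨⟨i, Set.mem_union_right _ rfl⟩, ?_⟩
        rw [Set.union_assoc, Set.union_self]
        exact hB.2.2
    
  have hShorn := repCover_snd_congr cov hequiv hchain
  have hHorn := repCover_snd_horn cov i hShorn
  have hcomp := repCover_comp (hf m i) hHorn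
  have hfinal := repCover_congr hcomp
    (relMap_snd ((SSet.horn (m + 1) i).ι) (evMap f))
  exact isCover_of_repCover_yoneda_map hfinal
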